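/- arXiv:2107.07575 — 2 statements merged into one kernel-verified Lean document; each statement's English description precedes it below -/
import Mathlib

section
/- Let α be a unit fraction (α⁻¹ a positive integer), and define a_k = Φ⁻¹(kα/2) for k = 0, …, 2/α, where Φ is the standard normal CDF. Define R_mm = (⋃_{k=1}^{2/α} (a_{k-1}, a_k) × (a_{k-1}, a_k)) ∪ (⋃_{k=1}^{2/α} (a_{k-1}, a_k) × (−a_k, −a_{k-1})). If (Z_x, Z_y) is bivariate normal with mean (δ_x, 0) and identity covariance, then P((Z_x, Z_y) ∈ R_mm) = α for every real δ_x. -/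
open MeasureTheory ProbabilityTheory Set Filter Pointwise

/-- The standard normal cumulative distribution function Φ. -/
noncomputable def stdPhi (x : ℝ) : ℝ := ((gaussianReal 0 1) (Set.Iic x)).toReal

/-- The inverse Φ⁻¹ of the standard normal CDF. -/
noncomputable def stdPhiInv : ℝ → ℝ := Function.invFun stdPhi

/-- The law of (Z_x, Z_y) ~ N((dx, dy), I₂). -/
noncomputable def gauss2 (dx dy : ℝ) : Measure (ℝ × ℝ) :=
  (gaussianReal dx 1).prod (gaussianReal dy 1)


/-- a_k = Φ⁻¹(k·α/2) where α = 1/N. -/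
noncomputable def aseq (N k : ℕ) : ℝ := stdPhiInv ((k : ℝ) / (2 * N))

/-- The interval (a_{k-1}, a_k), with a_0 = -∞ and a_{2N} = ∞. -/
noncomputable def band (N k : ℕ) : Set ℝ :=
  if k = 1 then Set.Iio (aseq N 1)
  else if k = 2 * N then Set.Ioi (aseq N (2 * N - 1))
  else Set.Ioo (aseq N (k - 1)) (aseq N k)

/-- The minimax rejection region R_mm: diagonal and anti-diagonal open squares. -/
noncomputable def Rmm (N : ℕ) : Set (ℝ × ℝ) :=
  (⋃ k ∈ Finset.Icc 1 (2 * N), band N k ×ˢ band N k) ∪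
  (⋃ k ∈ Finset.Icc 1 (2 * N), band N k ×ˢ (-(band N k)))

noncomputable def pdfn : ℝ → ℝ := gaussianPDFReal 0 1

lemma pdfn_pos (x : ℝ) : 0 < pdfn x := gaussianPDFReal_pos 0 1 x one_ne_zero

lemma pdfn_integrable : MeasureTheory.Integrable pdfn := integrable_gaussianPDFReal 0 1

lemma pdfn_continuous : Continuous pdfn := by
  unfold pdfn gaussianPDFReal
  fun_prop

lemma stdPhi_eq_integral (x : ℝ) : stdPhi x = ∫ t in Set.Iic x, pdfn t := by
  rw [stdPhi, gaussianReal_apply_eq_integral 0 one_ne_zero]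
  exact ENNReal.toReal_ofReal
      (setIntegral_nonneg measurableSet_Iic fun t _ => (pdfn_pos t).le)

lemma stdPhi_sub (y x : ℝ) : stdPhi x - stdPhi y = ∫ t in y..x, pdfn t := by
  rw [stdPhi_eq_integral, stdPhi_eq_integral]
  exact intervalIntegral.integral_Iic_sub_Iic (pdfn_integrable.integrableOn)
    (pdfn_integrable.integrableOn)

lemma stdPhi_strictMono : StrictMono stdPhi := by
  intro y x hyx
  have h := stdPhi_sub y x
  have hpos : 0 < ∫ t in y..x, pdfn t :=
    intervalIntegral.intervalIntegral_pos_of_pos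
      (pdfn_continuous.intervalIntegrable y x) (fun t => pdfn_pos t) hyx
  linarith

lemma stdPhi_continuous : Continuous stdPhi := by
  have : stdPhi = fun x => (∫ t in (0:ℝ)..x, pdfn t) + stdPhi 0 := by
    funext x
    have := stdPhi_sub 0 x
    linarith
  rw [this]
  exact (intervalIntegral.continuous_primitive
    (fun a b => pdfn_continuous.intervalIntegrable a b) 0).add continuous_const

lemma stdPhi_eq_cdf : stdPhi = cdf (gaussianReal 0 1) := by
  funext x; rw [cdf_eq_real]; rfl

lemma stdPhi_surj {p : ℝ} (hp0 : 0 < p) (hp1 : p < 1) : ∃ x, stdPhi x = p := by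
  have hb : ∀ᶠ x in atBot, stdPhi x < p := by
    rw [stdPhi_eq_cdf]
    exact (tendsto_cdf_atBot (μ := gaussianReal 0 1)).eventually_lt_const hp0
  have ht : ∀ᶠ x in atTop, p < stdPhi x := by
    rw [stdPhi_eq_cdf]
    exact (tendsto_cdf_atTop (μ := gaussianReal 0 1)).eventually_const_lt hp1
  obtain ⟨a, ha⟩ := hb.exists
  obtain ⟨b, hbb⟩ := ht.exists
  obtain ⟨x, hx⟩ := intermediate_value_univ a b stdPhi_continuous
    (show p ∈ Set.Icc (stdPhi a) (stdPhi b) from ⟨ha.le, hbb.le⟩)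
  exact ⟨x, hx⟩

lemma stdPhi_inv_eq {p : ℝ} (hp0 : 0 < p) (hp1 : p < 1) : stdPhi (stdPhiInv p) = p :=
  Function.invFun_eq (stdPhi_surj hp0 hp1)

lemma stdPhiInv_phi (x : ℝ) : stdPhiInv (stdPhi x) = x :=
  Function.leftInverse_invFun stdPhi_strictMono.injective x

-- no atoms
lemma gauss_singleton (m x : ℝ) : gaussianReal m 1 {x} = 0 := by
  refine gaussianReal_absolutelyContinuous m one_ne_zero ?_
  simp

-- neg invariance
lemma gauss_neg_apply (s : Set ℝ) (hs : MeasurableSet s) :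
    gaussianReal 0 1 ((fun x => -x) ⁻¹' s) = gaussianReal 0 1 s := by
  have h := gaussianReal_map_const_mul (μ := 0) (v := 1) (-1)
  have h2 : (NNReal.mk ((-1:ℝ)^2) (sq_nonneg _)) * 1 = 1 := by
    ext; norm_num
  rw [h2] at h
  have : Measure.map (fun x => (-1:ℝ) * x) (gaussianReal 0 1) s = gaussianReal 0 1 s := by
    rw [show ((-1:ℝ)*(0:ℝ)) = 0 by ring] at h
    rw [h]
  rw [← this, Measure.map_apply (by fun_prop) hs]
  congr 1; ext x; simp

lemma stdPhi_zero : stdPhi 0 = 1/2 := by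
  have h1 : gaussianReal 0 1 (Set.Iic (0:ℝ)) + gaussianReal 0 1 (Set.Ioi (0:ℝ)) = 1 := by
    rw [← measure_union (by simp [Set.disjoint_left]) measurableSet_Ioi]
    simp [Set.Iic_union_Ioi]
  have h2 : gaussianReal 0 1 (Set.Ioi (0:ℝ)) = gaussianReal 0 1 (Set.Iic (0:ℝ)) := by
    have := gauss_neg_apply (Set.Ioi (0:ℝ)) measurableSet_Ioi
    have hpre : (fun x : ℝ => -x) ⁻¹' (Set.Ioi 0) = Set.Iio 0 := by
      ext x; simp
    rw [hpre] at this
    rw [← this]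
    have : Set.Iic (0:ℝ) = Set.Iio 0 ∪ {0} := by ext x; simp [le_iff_lt_or_eq]
    rw [this, measure_union (by simp) (measurableSet_singleton _), gauss_singleton, add_zero]
  rw [h2, ← two_mul] at h1
  have hfin : gaussianReal 0 1 (Set.Iic (0:ℝ)) ≠ ⊤ := measure_ne_top _ _
  unfold stdPhi
  have : (2 * gaussianReal 0 1 (Set.Iic (0:ℝ))).toReal = (1:ENNReal).toReal := by rw [h1]
  rw [ENNReal.toReal_mul] at this
  simp at this
  linarith

section Aseq
variable {N : ℕ}

lemma aseq_phi (hN : 0 < N) {k : ℕ} (h1 : 1 ≤ k) (h2 : k < 2 * N) :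
    stdPhi (aseq N k) = (k : ℝ) / (2 * N) := by
  have hNpos : (0:ℝ) < N := by exact_mod_cast hN
  apply stdPhi_inv_eq
  · positivity
  · rw [div_lt_one (by positivity)]
    exact_mod_cast h2

lemma aseq_le (hN : 0 < N) {j k : ℕ} (h1 : 1 ≤ j) (hjk : j ≤ k) (h2 : k < 2 * N) :
    aseq N j ≤ aseq N k := by
  have hNpos : (0:ℝ) < N := by exact_mod_cast hN
  rw [← stdPhi_strictMono.le_iff_le, aseq_phi hN h1 (lt_of_le_of_lt hjk h2),
    aseq_phi hN (le_trans h1 hjk) h2]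
  have : (j:ℝ) ≤ k := by exact_mod_cast hjk
  gcongr

lemma aseq_nonpos (hN : 0 < N) {k : ℕ} (h1 : 1 ≤ k) (h2 : k ≤ N) : aseq N k ≤ 0 := by
  have hNpos : (0:ℝ) < N := by exact_mod_cast hN
  rw [← stdPhi_strictMono.le_iff_le, aseq_phi hN h1 (by omega), stdPhi_zero]
  rw [div_le_iff₀ (by positivity)]
  push_cast
  nlinarith [show (k:ℝ) ≤ N from by exact_mod_cast h2]

lemma aseq_nonneg (hN : 0 < N) {k : ℕ} (h1 : N ≤ k) (h2 : k < 2 * N) : 0 ≤ aseq N k := by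
  have hNpos : (0:ℝ) < N := by exact_mod_cast hN
  have h1' : 1 ≤ k := le_trans hN h1
  rw [← stdPhi_strictMono.le_iff_le, aseq_phi hN h1' h2, stdPhi_zero]
  rw [le_div_iff₀ (by positivity)]
  push_cast
  nlinarith [show (N:ℝ) ≤ k from by exact_mod_cast h1]

lemma band_measurable (k : ℕ) : MeasurableSet (band N k) := by
  unfold band; split_ifs <;> measurability

lemma band_subset_Iio {k : ℕ} (h1 : 1 ≤ k) (h2 : k < 2 * N) :
    band N k ⊆ Set.Iio (aseq N k) := by
  unfold band
  split_ifs with hk1 hk2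
  · subst hk1; exact subset_rfl
  · omega
  · exact Set.Ioo_subset_Iio_self

lemma band_subset_Ioi {k : ℕ} (h1 : 2 ≤ k) (h2 : k ≤ 2 * N) :
    band N k ⊆ Set.Ioi (aseq N (k - 1)) := by
  unfold band
  split_ifs with hk1 hk2
  · omega
  · subst hk2; exact subset_rfl
  · exact Set.Ioo_subset_Ioi_self

lemma band_disjoint (hN : 0 < N) {j k : ℕ} (hj : 1 ≤ j) (hjk : j < k) (hk : k ≤ 2 * N) :
    Disjoint (band N j) (band N k) := by
  have h1 : band N j ⊆ Set.Iio (aseq N j) := band_subset_Iio hj (by omega)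
  have h2 : band N k ⊆ Set.Ioi (aseq N (k - 1)) := band_subset_Ioi (by omega) hk
  have h3 : aseq N j ≤ aseq N (k - 1) := aseq_le hN hj (by omega) (by omega)
  refine Set.disjoint_left.mpr fun x hxj hxk => ?_
  have := h1 hxj
  have := h2 hxk
  simp only [Set.mem_Iio, Set.mem_Ioi] at *
  linarith

lemma band_neg_disjoint (hN : 0 < N) {k : ℕ} (h1 : 1 ≤ k) (h2 : k ≤ 2 * N) :
    Disjoint (band N k) (-(band N k)) := by
  rcases le_or_gt k N with h | h
  · have hsub : band N k ⊆ Set.Iio 0 := by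
      refine (band_subset_Iio h1 (by omega)).trans ?_
      exact Set.Iio_subset_Iio (aseq_nonpos hN h1 h)
    refine Set.disjoint_left.mpr fun x hx hnx => ?_
    have hx1 : x < 0 := hsub hx
    rw [Set.mem_neg] at hnx
    have hx2 : -x < 0 := hsub hnx
    linarith
  · have hsub : band N k ⊆ Set.Ioi 0 := by
      refine (band_subset_Ioi (by omega) h2).trans ?_
      exact Set.Ioi_subset_Ioi (aseq_nonneg hN (by omega) (by omega))
    refine Set.disjoint_left.mpr fun x hx hnx => ?_
    have hx1 : 0 < x := hsub hx
    rw [Set.mem_neg] at hnx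
    have hx2 : 0 < -x := hsub hnx
    linarith

end Aseq

noncomputable def cdfm (m x : ℝ) : ℝ := ((gaussianReal m 1) (Set.Iic x)).toReal

lemma gauss_Iio (m x : ℝ) : gaussianReal m 1 (Set.Iio x) = gaussianReal m 1 (Set.Iic x) := by
  rw [← Set.Iio_union_right (a := x),
    measure_union (by simp) (measurableSet_singleton _), gauss_singleton, add_zero]

lemma mIio (m x : ℝ) : ((gaussianReal m 1) (Set.Iio x)).toReal = cdfm m x := by
  rw [gauss_Iio]; rfl

lemma mIoi (m x : ℝ) : ((gaussianReal m 1) (Set.Ioi x)).toReal = 1 - cdfm m x := by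
  have h := measure_compl (μ := gaussianReal m 1) (s := Set.Iic x) measurableSet_Iic
    (measure_ne_top _ _)
  rw [Set.compl_Iic] at h
  rw [h, measure_univ, ENNReal.toReal_sub_of_le prob_le_one (by simp)]
  simp [cdfm]

lemma mIoo (m a b : ℝ) (hab : a ≤ b) :
    ((gaussianReal m 1) (Set.Ioo a b)).toReal = cdfm m b - cdfm m a := by
  rcases eq_or_lt_of_le hab with rfl | h
  · simp
  · have hset : Set.Ioo a b = Set.Iio b \ Set.Iic a := by
      rw [Set.diff_eq, Set.compl_Iic, Set.inter_comm, Set.Ioi_inter_Iio]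
    have hsub : Set.Iic a ⊆ Set.Iio b := fun x hx => lt_of_le_of_lt hx h
    rw [hset, measure_diff hsub measurableSet_Iic.nullMeasurableSet
      (measure_ne_top _ _), ENNReal.toReal_sub_of_le
      (measure_mono hsub) (measure_ne_top _ _), mIio]
    rfl

-- cdfm values for the standard normal at aseq points
lemma cdfm_aseq {N k : ℕ} (hN : 0 < N) (h1 : 1 ≤ k) (h2 : k < 2 * N) :
    cdfm 0 (aseq N k) = (k : ℝ) / (2 * N) := by
  rw [show cdfm 0 (aseq N k) = stdPhi (aseq N k) from rfl, aseq_phi hN h1 h2]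

-- measure of bands under arbitrary mean m, telescoping form
noncomputable def gfun (N : ℕ) (m : ℝ) (k : ℕ) : ℝ :=
  if k = 0 then 0 else if 2 * N ≤ k then 1 else cdfm m (aseq N k)

lemma band_one (N : ℕ) : band N 1 = Set.Iio (aseq N 1) := if_pos rfl

lemma band_top {N : ℕ} (h : 2 * N ≠ 1) : band N (2 * N) = Set.Ioi (aseq N (2 * N - 1)) := by
  rw [band, if_neg h, if_pos rfl]

lemma band_mid {N k : ℕ} (h1 : k ≠ 1) (h2 : k ≠ 2 * N) :
    band N k = Set.Ioo (aseq N (k - 1)) (aseq N k) := by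
  rw [band, if_neg h1, if_neg h2]

lemma gfun_zero (N : ℕ) (m : ℝ) : gfun N m 0 = 0 := if_pos rfl

lemma gfun_top {N k : ℕ} (m : ℝ) (h0 : k ≠ 0) (h : 2 * N ≤ k) : gfun N m k = 1 := by
  rw [gfun, if_neg h0, if_pos h]

lemma gfun_mid {N k : ℕ} (m : ℝ) (h0 : k ≠ 0) (h : k < 2 * N) :
    gfun N m k = cdfm m (aseq N k) := by
  rw [gfun, if_neg h0, if_neg (by omega)]

lemma band_toReal (N : ℕ) (hN : 0 < N) (m : ℝ) {k : ℕ} (h1 : 1 ≤ k) (h2 : k ≤ 2 * N) :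
    ((gaussianReal m 1) (band N k)).toReal = gfun N m k - gfun N m (k - 1) := by
  by_cases hk1 : k = 1
  · subst hk1
    rw [band_one, mIio, gfun_zero, gfun_mid m one_ne_zero (by omega), sub_zero]
  · by_cases hk2 : k = 2 * N
    · subst hk2
      rw [band_top (by omega), mIoi, gfun_top m (by omega) le_rfl,
        gfun_mid m (by omega) (by omega)]
    · rw [band_mid hk1 hk2, mIoo _ _ _ (aseq_le hN (by omega) (by omega) (by omega)),
        gfun_mid m (by omega) (by omega), gfun_mid m (by omega) (by omega)]

lemma neg_band_eq {N k : ℕ} : -(band N k) = (fun x : ℝ => -x) ⁻¹' (band N k) := by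
  ext x; simp [Set.mem_neg]

lemma neg_band_measurable {N : ℕ} (k : ℕ) : MeasurableSet (-(band N k)) := by
  rw [neg_band_eq]; exact (band_measurable k).preimage (by fun_prop)

lemma nu_band {N k : ℕ} (hN : 0 < N) (h1 : 1 ≤ k) (h2 : k ≤ 2 * N) :
    ((gaussianReal 0 1) (band N k)).toReal = 1 / (2 * N) := by
  have hNpos : (0:ℝ) < N := by exact_mod_cast hN
  rw [band_toReal N hN 0 h1 h2]
  by_cases hk1 : k = 1
  · subst hk1
    rw [gfun_zero, gfun_mid 0 one_ne_zero (by omega), cdfm_aseq hN le_rfl (by omega)]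
    norm_num
  · by_cases hk2 : k = 2 * N
    · subst hk2
      rw [gfun_top 0 (by omega) le_rfl, gfun_mid 0 (by omega) (by omega),
        cdfm_aseq hN (by omega) (by omega)]
      have : ((2 * N - 1 : ℕ) : ℝ) = 2 * N - 1 := by
        push_cast [Nat.cast_sub (by omega : 1 ≤ 2 * N)]; ring
      rw [this]
      field_simp
      ring
    · rw [gfun_mid 0 (by omega) (by omega), gfun_mid 0 (by omega) (by omega),
        cdfm_aseq hN h1 (by omega), cdfm_aseq hN (by omega) (by omega)]
      have : ((k - 1 : ℕ) : ℝ) = k - 1 := by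
        push_cast [Nat.cast_sub (by omega : 1 ≤ k)]; ring
      rw [this]
      field_simp
      ring

lemma nu_T {N k : ℕ} (hN : 0 < N) (h1 : 1 ≤ k) (h2 : k ≤ 2 * N) :
    ((gaussianReal 0 1) (band N k ∪ -(band N k))).toReal = 1 / N := by
  have hNpos : (0:ℝ) < N := by exact_mod_cast hN
  rw [measure_union (band_neg_disjoint hN h1 h2) (neg_band_measurable k),
    ENNReal.toReal_add (measure_ne_top _ _) (measure_ne_top _ _)]
  have hneg : (gaussianReal 0 1) (-(band N k)) = (gaussianReal 0 1) (band N k) := by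
    rw [neg_band_eq]; exact gauss_neg_apply _ (band_measurable k)
  rw [hneg, nu_band hN h1 h2, ← add_div]
  rw [show (1:ℝ) + 1 = 2 from by norm_num]
  rw [mul_comm, ← div_div, div_right_comm]
  norm_num

lemma mu_band_sum {N : ℕ} (hN : 0 < N) (m : ℝ) :
    ∑ k ∈ Finset.Icc 1 (2 * N), ((gaussianReal m 1) (band N k)).toReal = 1 := by
  have h : ∀ k ∈ Finset.Icc 1 (2 * N),
      ((gaussianReal m 1) (band N k)).toReal = gfun N m k - gfun N m (k - 1) := by
    intro k hk
    rw [Finset.mem_Icc] at hk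
    exact band_toReal N hN m hk.1 hk.2
  rw [Finset.sum_congr rfl h, ← Finset.Ico_add_one_right_eq_Icc, Finset.sum_Ico_eq_sum_range]
  have : ∀ i, gfun N m (1 + i) - gfun N m (1 + i - 1) = gfun N m (i + 1) - gfun N m i := by
    intro i; congr 1 <;> congr 1 <;> omega
  rw [Finset.sum_congr rfl fun i _ => this i, Finset.sum_range_sub (gfun N m)]
  rw [show 2 * N + 1 - 1 = 2 * N from rfl, gfun_top m (by omega) le_rfl, gfun_zero, sub_zero]


/-- If (Z_x, Z_y) ~ N((δ_x, 0), I₂) and α = 1/N is a unit fraction, then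
P((Z_x, Z_y) ∈ R_mm) = α for every real δ_x. -/
theorem stmt0 (N : ℕ) (hN : 0 < N) (δx : ℝ) :
    ((gauss2 δx 0) (Rmm N)).toReal = 1 / (N : ℝ) := by
  have hNpos : (0:ℝ) < N := by exact_mod_cast hN
  have hRmm : Rmm N = ⋃ k ∈ Finset.Icc 1 (2 * N),
      band N k ×ˢ (band N k ∪ -(band N k)) := by
    unfold Rmm
    ext ⟨x, y⟩
    simp only [Set.mem_union, Set.mem_iUnion, Set.mem_prod, Set.mem_union, exists_prop]
    constructor
    · rintro (⟨k, hk, hx, hy⟩ | ⟨k, hk, hx, hy⟩)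
      exacts [⟨k, hk, hx, Or.inl hy⟩, ⟨k, hk, hx, Or.inr hy⟩]
    · rintro ⟨k, hk, hx, hy | hy⟩
      exacts [Or.inl ⟨k, hk, hx, hy⟩, Or.inr ⟨k, hk, hx, hy⟩]
  rw [hRmm]
  have hdisj : (↑(Finset.Icc 1 (2 * N)) : Set ℕ).Pairwise
      (Function.onFun Disjoint fun k => band N k ×ˢ (band N k ∪ -(band N k))) := by
    intro j hj k hk hjk
    simp only [Finset.coe_Icc, Set.mem_Icc] at hj hk
    rcases lt_or_gt_of_ne hjk with h | h
    · exact Set.disjoint_prod.mpr (Or.inl (band_disjoint hN hj.1 h hk.2))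
    · exact (Set.disjoint_prod.mpr (Or.inl (band_disjoint hN hk.1 h hj.2))).symm
  have hmeas : ∀ k ∈ Finset.Icc 1 (2 * N),
      MeasurableSet (band N k ×ˢ (band N k ∪ -(band N k))) := fun k _ =>
    (band_measurable k).prod ((band_measurable k).union (neg_band_measurable k))
  have hprob : IsProbabilityMeasure (gauss2 δx 0) := by unfold gauss2; infer_instance
  rw [measure_biUnion_finset hdisj hmeas]
  rw [ENNReal.toReal_sum (fun k _ => by
    refine ne_of_lt (lt_of_le_of_lt (measure_mono (Set.subset_univ _)) ?_)
    rw [show (gauss2 δx 0) Set.univ = 1 from measure_univ]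
    exact ENNReal.one_lt_top)]
  have hterm : ∀ k ∈ Finset.Icc 1 (2 * N),
      ((gauss2 δx 0) (band N k ×ˢ (band N k ∪ -(band N k)))).toReal =
        ((gaussianReal δx 1) (band N k)).toReal * (1 / N) := by
    intro k hk
    rw [Finset.mem_Icc] at hk
    rw [gauss2, Measure.prod_prod, ENNReal.toReal_mul, nu_T hN hk.1 hk.2]
  rw [Finset.sum_congr rfl hterm, ← Finset.sum_mul, mu_band_sum hN δx, one_mul]
end

section
/- The maximal discrepancy between nominal level α and actual worst-case type-1 error ⌊α⁻¹⌋α² + (1 − ⌊α⁻¹⌋α)² of the extended minimax test, over all α ∈ (0, 1), equals 1/8 and is attained at α = 3/4 (where the actual worst-case type-1 error is 5/8). Moreover, for all α < 1/20, the discrepancy is at most 1/1680. -/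
open Set

/-- The discrepancy d(α) = α − [⌊α⁻¹⌋ α² + (1 − ⌊α⁻¹⌋ α)²] between the nominal level α
and the actual worst-case type-1 error of the extended minimax test. -/
noncomputable def dgap (α : ℝ) : ℝ :=
  α - ((⌊α⁻¹⌋₊ : ℝ) * α ^ 2 + (1 - (⌊α⁻¹⌋₊ : ℝ) * α) ^ 2)

lemma dgap_key (k α : ℝ) (hk : 1 ≤ k) :
    α - (k * α ^ 2 + (1 - k * α) ^ 2) ≤ 1 / (4 * k * (k + 1)) := by
  have hk0 : 0 < k := by linarith
  have h1 : 0 < 4 * k * (k + 1) := by nlinarith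
  rw [le_div_iff₀ h1]
  nlinarith [sq_nonneg (2 * k * (k + 1) * α - (2 * k + 1)), sq_nonneg (k * α - 1)]

lemma floor_ge (α : ℝ) (hα : 0 < α) (n : ℕ) (h : α < 1 / n) : n ≤ ⌊α⁻¹⌋₊ := by
  rcases Nat.eq_zero_or_pos n with h0 | h0
  · simp [h0]
  · apply Nat.le_floor
    rw [le_inv_comm₀ (by positivity) hα]
    have : α < ((n : ℝ))⁻¹ := by rw [← one_div]; exact h
    linarith

/-- The maximal discrepancy over α ∈ (0,1) equals 1/8, attained at α = 3/4 (where the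
actual worst-case type-1 error is 5/8); moreover the discrepancy is at most 1/1680 for
all α < 1/20. -/
theorem stmt14 :
    (∀ α ∈ Set.Ioo (0 : ℝ) 1, dgap α ≤ 1 / 8) ∧
    dgap (3 / 4) = 1 / 8 ∧
    ((⌊((3 : ℝ) / 4)⁻¹⌋₊ : ℝ) * (3 / 4) ^ 2
        + (1 - (⌊((3 : ℝ) / 4)⁻¹⌋₊ : ℝ) * (3 / 4)) ^ 2 = 5 / 8) ∧
    (∀ α ∈ Set.Ioo (0 : ℝ) 1, α < 1 / 20 → dgap α ≤ 1 / 1680) := by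
  have hf : ⌊((3 : ℝ) / 4)⁻¹⌋₊ = 1 := by
    rw [Nat.floor_eq_iff (by norm_num)]; norm_num
  refine ⟨?_, ?_, ?_, ?_⟩
  · intro α ⟨h0, h1⟩
    have hK : 1 ≤ ⌊α⁻¹⌋₊ := floor_ge α h0 1 (by simpa using h1)
    have hKr : (1 : ℝ) ≤ (⌊α⁻¹⌋₊ : ℝ) := by exact_mod_cast hK
    have := dgap_key (⌊α⁻¹⌋₊ : ℝ) α hKr
    have hle : 1 / (4 * (⌊α⁻¹⌋₊ : ℝ) * ((⌊α⁻¹⌋₊ : ℝ) + 1)) ≤ 1 / 8 := by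
      apply one_div_le_one_div_of_le (by norm_num); nlinarith
    calc dgap α ≤ _ := this
    _ ≤ 1 / 8 := hle
  · unfold dgap; rw [hf]; norm_num
  · rw [hf]; norm_num
  · intro α ⟨h0, h1⟩ h20
    have hK : 20 ≤ ⌊α⁻¹⌋₊ := floor_ge α h0 20 (by simpa using h20)
    have hKr : (20 : ℝ) ≤ (⌊α⁻¹⌋₊ : ℝ) := by exact_mod_cast hK
    have := dgap_key (⌊α⁻¹⌋₊ : ℝ) α (by linarith)
    have hle : 1 / (4 * (⌊α⁻¹⌋₊ : ℝ) * ((⌊α⁻¹⌋₊ : ℝ) + 1)) ≤ 1 / 1680 := by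
      apply one_div_le_one_div_of_le (by norm_num); nlinarith
    calc dgap α ≤ _ := this
    _ ≤ 1 / 1680 := hle
end
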